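/- arXiv:2409.07873 — 4 statements merged into one kernel-verified Lean document; each statement's English description precedes it below -/
import Mathlib

section
/- Let d ≥ 1 and let D ⊆ ℝ^d be a nonempty bounded open set whose topological boundary has Lebesgue measure zero. Let s_1, …, s_N ∈ D be pairwise distinct seed points and let ν_1, …, ν_N be real numbers with ν_i > 0 for every i and Σ_{i=1}^N ν_i < vol(D). Then there exists a weight vector ψ ∈ ℝ^N such that vol(V_i(s,ψ)) = ν_i for every i = 1, …, N, and consequently vol(V_0(s,ψ)) = vol(D) − Σ_{i=1}^N ν_i. -/
open MeasureTheory

noncomputable section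

/-- The Laguerre cell `Lag_i(s, ψ)` of the diagram of the domain `D` generated by the
seed points `s` and weights `ψ`. -/
def Lag {d N : ℕ} (D : Set (EuclideanSpace ℝ (Fin d)))
    (s : Fin N → EuclideanSpace ℝ (Fin d)) (ψ : Fin N → ℝ) (i : Fin N) :
    Set (EuclideanSpace ℝ (Fin d)) :=
  {x | x ∈ closure D ∧ ∀ j : Fin N, j ≠ i → ‖x - s i‖ ^ 2 - ψ i ≤ ‖x - s j‖ ^ 2 - ψ j}

/-- The modified Laguerre cell `V_i(s, ψ)`: the Laguerre cell intersected with the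
closed ball of center `s i` and radius `√(ψ i)`. -/
def Vcell {d N : ℕ} (D : Set (EuclideanSpace ℝ (Fin d)))
    (s : Fin N → EuclideanSpace ℝ (Fin d)) (ψ : Fin N → ℝ) (i : Fin N) :
    Set (EuclideanSpace ℝ (Fin d)) :=
  Lag D s ψ i ∩ {x | ‖x - s i‖ ^ 2 ≤ ψ i}

/-- The void cell `V_0(s, ψ)`. -/
def Vvoid {d N : ℕ} (D : Set (EuclideanSpace ℝ (Fin d)))
    (s : Fin N → EuclideanSpace ℝ (Fin d)) (ψ : Fin N → ℝ) :
    Set (EuclideanSpace ℝ (Fin d)) :=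
  {x | x ∈ closure D ∧ ∀ i : Fin N, 0 ≤ ‖x - s i‖ ^ 2 - ψ i}

/-- The Kantorovich functional `K(s, ν, ψ)`. -/
def Kfun {d N : ℕ} (D : Set (EuclideanSpace ℝ (Fin d)))
    (s : Fin N → EuclideanSpace ℝ (Fin d)) (ν ψ : Fin N → ℝ) : ℝ :=
  (∑ i, ∫ x in Vcell D s ψ i, (‖x - s i‖ ^ 2 - ψ i)) + ∑ i, ν i * ψ i

/-! The weights are a maximiser of the dual functional
`Φ(ψ) = ∫_{cl D} min (0, minᵢ (‖x - sᵢ‖² - ψᵢ)) dx + ∑ᵢ νᵢ ψᵢ`, which is continuous and tends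
to `-∞` at infinity because `∑ νᵢ < vol D`. Shifting `ψᵢ` by `t` changes `Φ` by at least
`t (νᵢ - vol Vᵢ(ψ + t eᵢ))`, so at a maximiser `vol Vᵢ(ψ + t eᵢ)` is `≥ νᵢ` for `t > 0` and
`≤ νᵢ` for `t < 0`. Letting `t → 0` gives `vol Vᵢ(ψ) = νᵢ`, since spheres and bisectors are
Lebesgue-null; up to the same null sets the cells `Vᵢ` and `V₀` partition `cl D`, which has the
volume of `D`. -/

namespace MeasureTheory.Measure

variable {E : Type*} [NormedAddCommGroup E] [InnerProductSpace ℝ E] [FiniteDimensional ℝ E]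
  [MeasurableSpace E] [BorelSpace E] (μ : Measure E) [μ.IsAddHaarMeasure]

theorem addHaar_setOf_inner_eq {v : E} (hv : v ≠ 0) (c : ℝ) :
    μ {x | inner ℝ v x = c} = 0 := by
  let A : AffineSubspace ℝ E := (affineSpan ℝ {c}).comap (innerₛₗ ℝ v).toAffineMap
  have hA : (A : Set E) = {x | inner ℝ v x = c} := by ext; simp [A]
  rw [← hA]
  refine addHaar_affineSubspace μ A fun h => hv ?_
  have hmem : ∀ x, x ∈ {x | inner ℝ v x = c} := fun x => by rw [← hA, h]; trivial
  have hv : inner ℝ v v = inner ℝ v (0 : E) := (hmem v).trans (hmem 0).symm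
  simpa using hv

theorem addHaar_setOf_norm_sub_sq_eq [Nontrivial E] (a : E) (r : ℝ) :
    μ {x | ‖x - a‖ ^ 2 = r} = 0 :=
  measure_mono_null (fun x (hx : ‖x - a‖ ^ 2 = r) => by
      simp [← hx, Real.sqrt_sq (norm_nonneg _)])
    (addHaar_sphere μ a √r)

theorem addHaar_setOf_norm_sub_sq_sub_norm_sub_sq_eq {a b : E} (hab : a ≠ b) (r : ℝ) :
    μ {x | ‖x - a‖ ^ 2 - ‖x - b‖ ^ 2 = r} = 0 := by
  convert addHaar_setOf_inner_eq μ (sub_ne_zero.2 hab.symm) ((r + ‖b‖ ^ 2 - ‖a‖ ^ 2) / 2)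
    using 2
  ext x
  rw [Set.mem_ofPred_eq, Set.mem_ofPred_eq, norm_sub_sq_real, norm_sub_sq_real, inner_sub_left,
    real_inner_comm x, real_inner_comm x]
  constructor <;> intro h <;> linarith

end MeasureTheory.Measure

open Finset Filter Topology

namespace Laguerre

variable {d N : ℕ}

/-- Cost of sending `x` to the seed `i`; the void cell is the extra index `none` (the paper's
index `0`), whose cost is identically `0`. -/
def cost (s : Fin N → EuclideanSpace ℝ (Fin d)) (ψ : Fin N → ℝ) (x : EuclideanSpace ℝ (Fin d)) :
    Option (Fin N) → ℝ
  | none => 0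
  | some i => ‖x - s i‖ ^ 2 - ψ i

def envelope (s : Fin N → EuclideanSpace ℝ (Fin d)) (ψ : Fin N → ℝ)
    (x : EuclideanSpace ℝ (Fin d)) : ℝ :=
  univ.inf' univ_nonempty (cost s ψ x)

def cell (D : Set (EuclideanSpace ℝ (Fin d))) (s : Fin N → EuclideanSpace ℝ (Fin d))
    (ψ : Fin N → ℝ) : Option (Fin N) → Set (EuclideanSpace ℝ (Fin d))
  | none => Vvoid D s ψ
  | some i => Vcell D s ψ i

def dual (D : Set (EuclideanSpace ℝ (Fin d))) (s : Fin N → EuclideanSpace ℝ (Fin d))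
    (ν ψ : Fin N → ℝ) : ℝ :=
  (∫ x in closure D, envelope s ψ x) + ν ⬝ᵥ ψ

variable {D : Set (EuclideanSpace ℝ (Fin d))} {s : Fin N → EuclideanSpace ℝ (Fin d)}
  {ν ψ : Fin N → ℝ} {x : EuclideanSpace ℝ (Fin d)}

lemma mem_cell_iff {o : Option (Fin N)} :
    x ∈ cell D s ψ o ↔ x ∈ closure D ∧ ∀ o', cost s ψ x o ≤ cost s ψ x o' := by
  cases o with
  | none => simp [cell, Vvoid, cost, Option.forall]
  | some i =>
    simp only [cell, Vcell, Lag, cost, Option.forall, Set.mem_inter_iff, Set.mem_ofPred_eq,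
      sub_nonpos]
    constructor
    · rintro ⟨⟨hx, h⟩, hi⟩
      exact ⟨hx, hi, fun j => if hj : j = i then hj ▸ le_rfl else h j hj⟩
    · rintro ⟨hx, hi, h⟩
      exact ⟨⟨hx, fun j _ => h j⟩, hi⟩

lemma envelope_le (o : Option (Fin N)) : envelope s ψ x ≤ cost s ψ x o :=
  inf'_le _ (mem_univ o)

lemma le_envelope_iff {a : ℝ} : a ≤ envelope s ψ x ↔ ∀ o, a ≤ cost s ψ x o := by
  simp [envelope, le_inf'_iff]

lemma continuous_cost (s : Fin N → EuclideanSpace ℝ (Fin d)) (o : Option (Fin N)) :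
    Continuous fun p : (Fin N → ℝ) × EuclideanSpace ℝ (Fin d) => cost s p.1 p.2 o := by
  cases o <;> simp only [cost] <;> fun_prop

lemma continuous_envelope (s : Fin N → EuclideanSpace ℝ (Fin d)) :
    Continuous fun p : (Fin N → ℝ) × EuclideanSpace ℝ (Fin d) => envelope s p.1 p.2 :=
  Continuous.finset_inf'_apply _ fun o _ => continuous_cost s o

lemma cell_subset_closure (o : Option (Fin N)) : cell D s ψ o ⊆ closure D :=
  fun _ hx => (mem_cell_iff.1 hx).1

lemma isClosed_cell (o : Option (Fin N)) : IsClosed (cell D s ψ o) := by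
  have : cell D s ψ o = closure D ∩ ⋂ o', {x | cost s ψ x o ≤ cost s ψ x o'} := by
    ext; simp [mem_cell_iff]
  rw [this]
  have hc (o : Option (Fin N)) : Continuous fun x => cost s ψ x o :=
    (continuous_cost s o).comp₂ continuous_const continuous_id
  exact isClosed_closure.inter <| isClosed_iInter fun o' => isClosed_le (hc o) (hc o')

lemma iUnion_cell : ⋃ o, cell D s ψ o = closure D := by
  refine (Set.iUnion_subset cell_subset_closure).antisymm fun x hx => ?_
  obtain ⟨o, -, ho⟩ := exists_min_image univ (cost s ψ x) univ_nonempty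
  exact Set.mem_iUnion.2 ⟨o, mem_cell_iff.2 ⟨hx, fun o' => ho o' (mem_univ o')⟩⟩

lemma volume_setOf_cost_eq [NeZero d] (hs : Function.Injective s) {o o' : Option (Fin N)}
    (h : o ≠ o') : volume {x | cost s ψ x o = cost s ψ x o'} = 0 := by
  have sphere (i : Fin N) : volume {x | cost s ψ x none = cost s ψ x (some i)} = 0 := by
    convert Measure.addHaar_setOf_norm_sub_sq_eq volume (s i) (ψ i) using 2
    ext x
    simp only [cost, Set.mem_ofPred_eq]
    constructor <;> intro h <;> linarith
  cases o with
  | none => cases o' with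
    | none => exact absurd rfl h
    | some j => exact sphere j
  | some i => cases o' with
    | none => simpa only [eq_comm] using sphere i
    | some j =>
      convert Measure.addHaar_setOf_norm_sub_sq_sub_norm_sub_sq_eq volume (a := s i) (b := s j)
        (hs.ne fun hij => h (by rw [hij])) (ψ i - ψ j) using 2
      ext x
      simp only [cost, Set.mem_ofPred_eq]
      constructor <;> intro h <;> linarith

lemma volume_Vvoid_add_sum_volume_Vcell [NeZero d] (hs : Function.Injective s) :
    volume (Vvoid D s ψ) + ∑ i, volume (Vcell D s ψ i) = volume (closure D) := by
  have hdisj : Pairwise (Function.onFun (AEDisjoint volume) (cell D s ψ)) :=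
    fun o o' h => measure_mono_null (fun x ⟨hx, hx'⟩ =>
      ((mem_cell_iff.1 hx).2 o').antisymm ((mem_cell_iff.1 hx').2 o)) (volume_setOf_cost_eq hs h)
  rw [← iUnion_cell,
    measure_iUnion₀ hdisj fun o => (isClosed_cell o).measurableSet.nullMeasurableSet,
    tsum_fintype, Fintype.sum_option]
  rfl

lemma volume_cell_ne_top (hDb : Bornology.IsBounded D) (o : Option (Fin N)) :
    volume (cell D s ψ o) ≠ ⊤ :=
  ne_top_of_le_ne_top hDb.isCompact_closure.measure_lt_top.ne
    (measure_mono (cell_subset_closure o))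

lemma measureReal_Vvoid_add_sum_measureReal_Vcell [NeZero d] (hDb : Bornology.IsBounded D)
    (hs : Function.Injective s) :
    volume.real (Vvoid D s ψ) + ∑ i, volume.real (Vcell D s ψ i) = volume.real (closure D) := by
  have hvoid : volume (Vvoid D s ψ) ≠ ⊤ := volume_cell_ne_top hDb none
  have hcell (i : Fin N) : volume (Vcell D s ψ i) ≠ ⊤ := volume_cell_ne_top hDb (some i)
  rw [measureReal_def volume (closure D), ← volume_Vvoid_add_sum_volume_Vcell hs,
    ENNReal.toReal_add hvoid (ENNReal.sum_ne_top.2 fun i _ => hcell i),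
    ENNReal.toReal_sum fun i _ => hcell i]
  rfl

lemma cost_add_single_self (i : Fin N) (t : ℝ) :
    cost s (ψ + Pi.single i t) x (some i) = cost s ψ x (some i) - t := by
  simp only [cost, Pi.add_apply, Pi.single_eq_same]
  ring

lemma cost_add_single_of_ne {i : Fin N} {o : Option (Fin N)} (h : o ≠ some i) (t : ℝ) :
    cost s (ψ + Pi.single i t) x o = cost s ψ x o := by
  cases o with
  | none => rfl
  | some j => simp [cost, Pi.single_eq_of_ne fun hji => h (congrArg some hji)]

lemma mem_Vcell_add_single_iff {i : Fin N} {t : ℝ} :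
    x ∈ Vcell D s (ψ + Pi.single i t) i ↔
      x ∈ closure D ∧ ∀ o ≠ some i, cost s ψ x (some i) ≤ cost s ψ x o + t := by
  change x ∈ cell D s _ (some i) ↔ _
  rw [mem_cell_iff]
  refine and_congr_right fun _ => forall_congr' fun o => ?_
  rcases eq_or_ne o (some i) with rfl | ho
  · simp
  · rw [cost_add_single_self, cost_add_single_of_ne ho, sub_le_iff_le_add]
    simp [ho]

lemma mem_Vcell_iff {i : Fin N} :
    x ∈ Vcell D s ψ i ↔ x ∈ closure D ∧ ∀ o ≠ some i, cost s ψ x (some i) ≤ cost s ψ x o := by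
  simpa using mem_Vcell_add_single_iff (D := D) (s := s) (ψ := ψ) (x := x) (i := i) (t := 0)

lemma monotone_Vcell_add_single (i : Fin N) :
    Monotone fun t => Vcell D s (ψ + Pi.single i t) i := fun t t' htt' x hx => by
  rw [mem_Vcell_add_single_iff] at hx ⊢
  exact ⟨hx.1, fun o ho => (hx.2 o ho).trans (by linarith)⟩

lemma envelope_sub_le_envelope_add_single (hx : x ∈ closure D) (i : Fin N) (t : ℝ) :
    envelope s ψ x - t * (Vcell D s (ψ + Pi.single i t) i).indicator 1 x ≤
      envelope s (ψ + Pi.single i t) x := by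
  rw [le_envelope_iff]
  intro o'
  have henv := envelope_le (s := s) (ψ := ψ) (x := x)
  by_cases hV : x ∈ Vcell D s (ψ + Pi.single i t) i
  · rw [Set.indicator_of_mem hV, Pi.one_apply, mul_one]
    rcases eq_or_ne o' (some i) with rfl | ho'
    · rw [cost_add_single_self]
      linarith [henv (some i)]
    · rw [cost_add_single_of_ne ho']
      linarith [(mem_Vcell_add_single_iff.1 hV).2 o' ho', henv (some i)]
  · rw [Set.indicator_of_notMem hV, mul_zero, sub_zero]
    obtain ⟨o, ho, hlt⟩ : ∃ o ≠ some i, cost s ψ x o + t < cost s ψ x (some i) := by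
      simpa [mem_Vcell_add_single_iff, hx] using hV
    rcases eq_or_ne o' (some i) with rfl | ho'
    · rw [cost_add_single_self]
      linarith [henv o]
    · rw [cost_add_single_of_ne ho']
      exact henv o'

lemma integrableOn_envelope (hDb : Bornology.IsBounded D) (ψ : Fin N → ℝ) :
    IntegrableOn (envelope s ψ) (closure D) :=
  ((continuous_envelope s).comp₂ continuous_const continuous_id).continuousOn.integrableOn_compact
    hDb.isCompact_closure

lemma dual_add_mul_sub_le_dual_add_single (hDb : Bornology.IsBounded D) (i : Fin N) (t : ℝ) :
    dual D s ν ψ + t * (ν i - volume.real (Vcell D s (ψ + Pi.single i t) i)) ≤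
      dual D s ν (ψ + Pi.single i t) := by
  set V := Vcell D s (ψ + Pi.single i t) i
  have hV : MeasurableSet V := (isClosed_cell (some i)).measurableSet
  have hind : IntegrableOn (V.indicator 1) (closure D) :=
    (integrableOn_const (C := (1 : ℝ)) hDb.isCompact_closure.measure_lt_top.ne).indicator hV
  have key : (∫ x in closure D, envelope s ψ x) - t * volume.real V ≤
      ∫ x in closure D, envelope s (ψ + Pi.single i t) x := by
    calc _ = ∫ x in closure D, (envelope s ψ x - t * V.indicator 1 x) := by
          rw [integral_sub (integrableOn_envelope hDb ψ) (hind.const_mul t), integral_const_mul,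
            integral_indicator_one hV, measureReal_restrict_apply hV,
            Set.inter_eq_left.2 (show V ⊆ closure D from cell_subset_closure (some i))]
      _ ≤ _ := setIntegral_mono_on ((integrableOn_envelope hDb ψ).sub (hind.const_mul t))
          (integrableOn_envelope hDb _) isClosed_closure.measurableSet
          fun x hx => envelope_sub_le_envelope_add_single hx i t
  simp only [dual, dotProduct_add, dotProduct_single]
  linarith

lemma le_measureReal_Vcell_of_forall_pos (hDb : Bornology.IsBounded D) (i : Fin N) {c : ℝ}
    (h : ∀ t > 0, c ≤ volume.real (Vcell D s (ψ + Pi.single i t) i)) :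
    c ≤ volume.real (Vcell D s ψ i) := by
  set V : ℕ → Set (EuclideanSpace ℝ (Fin d)) :=
    fun n => Vcell D s (ψ + Pi.single i (1 / ((n : ℝ) + 1))) i
  have hanti : Antitone V := fun m n hmn =>
    monotone_Vcell_add_single i (Nat.one_div_le_one_div hmn)
  have hsub : ⋂ n, V n ⊆ Vcell D s ψ i := by
    intro x hx
    simp only [Set.mem_iInter, V, mem_Vcell_add_single_iff] at hx
    refine mem_Vcell_iff.2 ⟨(hx 0).1, fun o ho => ?_⟩
    simpa using ge_of_tendsto' (tendsto_const_nhds.add tendsto_one_div_add_atTop_nhds_zero_nat)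
      fun n => (hx n).2 o ho
  have : ENNReal.ofReal c ≤ volume (Vcell D s ψ i) := calc
    _ ≤ ⨅ n, volume (V n) := le_iInf fun n =>
        (ENNReal.ofReal_le_iff_le_toReal (volume_cell_ne_top hDb (some i))).2
          (h _ Nat.one_div_pos_of_nat)
    _ = volume (⋂ n, V n) := (hanti.measure_iInter
        (fun n => (isClosed_cell (some i)).measurableSet.nullMeasurableSet)
        ⟨0, volume_cell_ne_top hDb (some i)⟩).symm
    _ ≤ _ := measure_mono hsub
  exact (ENNReal.ofReal_le_iff_le_toReal (volume_cell_ne_top hDb (some i))).1 this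

lemma measureReal_Vcell_le_of_forall_neg [NeZero d] (hDb : Bornology.IsBounded D)
    (hs : Function.Injective s) (i : Fin N) {c : ℝ}
    (h : ∀ t < 0, volume.real (Vcell D s (ψ + Pi.single i t) i) ≤ c) :
    volume.real (Vcell D s ψ i) ≤ c := by
  set V : ℕ → Set (EuclideanSpace ℝ (Fin d)) :=
    fun n => Vcell D s (ψ + Pi.single i (-(1 / ((n : ℝ) + 1)))) i
  have hmono : Monotone V := fun m n hmn =>
    monotone_Vcell_add_single i (neg_le_neg (Nat.one_div_le_one_div hmn))
  set Z := ⋃ o, ⋃ (_ : o ≠ some i), {x | cost s ψ x (some i) = cost s ψ x o}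
  have hZ : volume Z = 0 :=
    measure_iUnion_null fun o => measure_iUnion_null fun ho => volume_setOf_cost_eq hs ho.symm
  -- off the null set `Z` every defining inequality of the cell is strict, hence holds with a margin
  have hsub : Vcell D s ψ i ⊆ (⋃ n, V n) ∪ Z := by
    intro x hx
    rw [mem_Vcell_iff] at hx
    by_cases hxZ : x ∈ Z
    · exact Or.inr hxZ
    have hlt : ∀ o ≠ some i, cost s ψ x (some i) < cost s ψ x o := fun o ho =>
      (hx.2 o ho).lt_of_ne fun heq => hxZ (Set.mem_biUnion ho heq)
    have hev : ∀ᶠ n : ℕ in atTop,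
        ∀ o ≠ some i, cost s ψ x (some i) ≤ cost s ψ x o + -(1 / ((n : ℝ) + 1)) := by
      refine eventually_all.2 fun o => ?_
      rcases eq_or_ne o (some i) with rfl | ho
      · exact Eventually.of_forall fun _ h => absurd rfl h
      · filter_upwards [tendsto_one_div_add_atTop_nhds_zero_nat.eventually
          (gt_mem_nhds (sub_pos.2 (hlt o ho)))] with n hn _
        linarith
    obtain ⟨n, hn⟩ := hev.exists
    exact Or.inl (Set.mem_iUnion.2 ⟨n, mem_Vcell_add_single_iff.2 ⟨hx.1, hn⟩⟩)
  have hc : 0 ≤ c := measureReal_nonneg.trans (h (-1) (by norm_num))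
  have : volume (Vcell D s ψ i) ≤ ENNReal.ofReal c := calc
    _ ≤ volume (⋃ n, V n) + volume Z := (measure_mono hsub).trans (measure_union_le _ _)
    _ = ⨆ n, volume (V n) := by rw [hZ, add_zero, hmono.measure_iUnion]
    _ ≤ _ := iSup_le fun n =>
        (ENNReal.le_ofReal_iff_toReal_le (volume_cell_ne_top hDb (some i)) hc).2
          (h _ (neg_neg_of_pos Nat.one_div_pos_of_nat))
  exact ENNReal.toReal_le_of_le_ofReal hc this

lemma measureReal_Vcell_eq_of_forall_dual_le [NeZero d] (hDb : Bornology.IsBounded D)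
    (hs : Function.Injective s) (hmax : ∀ φ, dual D s ν φ ≤ dual D s ν ψ) (i : Fin N) :
    volume.real (Vcell D s ψ i) = ν i := by
  have key (t : ℝ) : t * (ν i - volume.real (Vcell D s (ψ + Pi.single i t) i)) ≤ 0 := by
    linarith [dual_add_mul_sub_le_dual_add_single (s := s) (ν := ν) (ψ := ψ) hDb i t,
      hmax (ψ + Pi.single i t)]
  refine le_antisymm (measureReal_Vcell_le_of_forall_neg hDb hs i fun t ht => ?_)
    (le_measureReal_Vcell_of_forall_pos hDb i fun t ht => ?_) <;> nlinarith [key t]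

lemma continuous_dual (hDb : Bornology.IsBounded D) : Continuous (dual D s ν) :=
  (continuous_parametric_integral_of_continuous (continuous_envelope s)
    hDb.isCompact_closure).add (continuous_const.dotProduct continuous_id)

lemma setIntegral_envelope_le (hDb : Bornology.IsBounded D) {k : Fin N} {R : ℝ}
    (hR : ∀ x ∈ closure D, ‖x - s k‖ ^ 2 ≤ R) :
    ∫ x in closure D, envelope s ψ x ≤ volume.real (closure D) * min 0 (R - ψ k) := by
  calc _ ≤ ∫ _ in closure D, min 0 (R - ψ k) :=
        setIntegral_mono_on (integrableOn_envelope hDb ψ)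
          (integrableOn_const hDb.isCompact_closure.measure_lt_top.ne)
          isClosed_closure.measurableSet fun x hx => le_min (envelope_le none)
            ((envelope_le (some k)).trans (by simp only [cost]; linarith [hR x hx]))
    _ = _ := by rw [setIntegral_const, smul_eq_mul]

lemma mul_min_zero_sub_add_mul_le (A S R t : ℝ) :
    A * min 0 (R - t) + S * t ≤ S * R - min S (A - S) * |t - R| := by
  rcases le_total t R with h | h
  · rw [min_eq_left (by linarith), abs_of_nonpos (by linarith)]
    nlinarith [mul_nonneg (sub_nonneg.2 (min_le_left S (A - S))) (sub_nonneg.2 h)]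
  · rw [min_eq_right (by linarith), abs_of_nonneg (by linarith)]
    nlinarith [mul_nonneg (sub_nonneg.2 (min_le_right S (A - S))) (sub_nonneg.2 h)]

lemma sum_mul_dual_le (hDb : Bornology.IsBounded D) (hν : ∀ i, 0 ≤ ν i) {R : Fin N → ℝ}
    (hR : ∀ k, ∀ x ∈ closure D, ‖x - s k‖ ^ 2 ≤ R k) (ψ : Fin N → ℝ) :
    (∑ k, ν k) * dual D s ν ψ ≤ ∑ k, ν k * ((∑ k, ν k) * R k -
      min (∑ k, ν k) (volume.real (closure D) - ∑ k, ν k) * |ψ k - R k|) := by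
  set S := ∑ k, ν k
  calc S * dual D s ν ψ = ∑ k, ν k * ((∫ x in closure D, envelope s ψ x) + S * ψ k) := by
        simp only [dual, dotProduct, mul_add, sum_add_distrib, ← sum_mul, mul_sum, S]
        ring_nf
    _ ≤ ∑ k, ν k * (volume.real (closure D) * min 0 (R k - ψ k) + S * ψ k) :=
        sum_le_sum fun k _ => mul_le_mul_of_nonneg_left
          (by linarith [setIntegral_envelope_le (ψ := ψ) hDb (hR k)]) (hν k)
    _ ≤ _ := sum_le_sum fun k _ =>
        mul_le_mul_of_nonneg_left (mul_min_zero_sub_add_mul_le _ _ _ _) (hν k)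

lemma tendsto_dual_cocompact_atBot (hDb : Bornology.IsBounded D) (hν : ∀ i, 0 < ν i)
    (hsum : ∑ i, ν i < volume.real (closure D)) :
    Tendsto (dual D s ν) (cocompact (Fin N → ℝ)) atBot := by
  choose r hr using fun k => hDb.closure.subset_closedBall (s k)
  have hR (k : Fin N) (x) (hx : x ∈ closure D) : ‖x - s k‖ ^ 2 ≤ r k ^ 2 :=
    pow_le_pow_left₀ (norm_nonneg _) (mem_closedBall_iff_norm.1 (hr k hx)) 2
  set S := ∑ k, ν k
  set m := min S (volume.real (closure D) - S)
  set B := S * ∑ k, ν k * r k ^ 2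
  refine tendsto_atBot.2 fun C => mem_cocompact.2
    ⟨Set.univ.pi fun j => Metric.closedBall (r j ^ 2) ((B - S * C) / (m * ν j)),
      isCompact_univ_pi fun j => isCompact_closedBall _ _, fun ψ hψ => ?_⟩
  obtain ⟨j, hj⟩ : ∃ j, (B - S * C) / (m * ν j) < |ψ j - r j ^ 2| := by
    simpa [Real.dist_eq] using hψ
  have hS : 0 < S := (hν j).trans_le (single_le_sum (fun k _ => (hν k).le) (mem_univ j))
  have hm : 0 < m := lt_min hS (by linarith)
  rw [div_lt_iff₀ (mul_pos hm (hν j))] at hj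
  have hexp : ∑ k, ν k * (S * r k ^ 2 - m * |ψ k - r k ^ 2|) =
      B - m * ∑ k, ν k * |ψ k - r k ^ 2| := by
    simp only [B, mul_sum, ← sum_sub_distrib]
    exact sum_congr rfl fun k _ => by ring
  have hj_le : ν j * |ψ j - r j ^ 2| ≤ ∑ k, ν k * |ψ k - r k ^ 2| :=
    single_le_sum (f := fun k => ν k * |ψ k - r k ^ 2|)
      (fun k _ => mul_nonneg (hν k).le (abs_nonneg _)) (mem_univ j)
  have hbound := sum_mul_dual_le hDb (fun k => (hν k).le) hR ψ
  rw [hexp] at hbound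
  have : S * dual D s ν ψ < S * C := by nlinarith
  exact (lt_of_mul_lt_mul_left this hS.le).le

end Laguerre

theorem stmt0_general {d N : ℕ} (hd : 1 ≤ d)
    (D : Set (EuclideanSpace ℝ (Fin d)))
    (hDb : Bornology.IsBounded D)
    (hfr : volume (frontier D) = 0)
    (s : Fin N → EuclideanSpace ℝ (Fin d))
    (hs : Function.Injective s)
    (ν : Fin N → ℝ) (hν : ∀ i, 0 < ν i)
    (hsum : ∑ i, ν i < (volume D).toReal) :
    ∃ ψ : Fin N → ℝ,
      (∀ i, (volume (Vcell D s ψ i)).toReal = ν i) ∧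
      (volume (Vvoid D s ψ)).toReal = (volume D).toReal - ∑ i, ν i := by
  have : NeZero d := ⟨by omega⟩
  have hcl : volume (closure D) = volume D := measure_closure_of_null_frontier hfr
  obtain ⟨ψ, hψ⟩ := (Laguerre.continuous_dual (s := s) (ν := ν) hDb).exists_forall_ge
    (Laguerre.tendsto_dual_cocompact_atBot hDb hν (by rwa [measureReal_def, hcl]))
  have hcell := Laguerre.measureReal_Vcell_eq_of_forall_dual_le hDb hs hψ
  refine ⟨ψ, hcell, ?_⟩
  have htotal := Laguerre.measureReal_Vvoid_add_sum_measureReal_Vcell (ψ := ψ) hDb hs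
  rw [measureReal_def volume (closure D), hcl, sum_congr rfl fun i _ => hcell i] at htotal
  exact eq_sub_of_add_eq htotal

/-- Existence of a weight vector realizing prescribed cell measures. -/
theorem stmt0 {d N : ℕ} (hd : 1 ≤ d) (hN : 1 ≤ N)
    (D : Set (EuclideanSpace ℝ (Fin d)))
    (hDo : IsOpen D) (hDne : D.Nonempty) (hDb : Bornology.IsBounded D)
    (hfr : volume (frontier D) = 0)
    (s : Fin N → EuclideanSpace ℝ (Fin d)) (hsD : ∀ i, s i ∈ D)
    (hs : Function.Injective s)
    (ν : Fin N → ℝ) (hν : ∀ i, 0 < ν i)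
    (hsum : ∑ i, ν i < (volume D).toReal) :
    ∃ ψ : Fin N → ℝ,
      (∀ i, (volume (Vcell D s ψ i)).toReal = ν i) ∧
      (volume (Vvoid D s ψ)).toReal = (volume D).toReal - ∑ i, ν i :=
  stmt0_general hd D hDb hfr s hs ν hν hsum
end
end

section
/- Let d ≥ 1, let D ⊆ ℝ^d be a bounded open set, let s_1, …, s_N ∈ ℝ^d be pairwise distinct, and let ν ∈ ℝ^N. If ψ* ∈ ℝ^N satisfies vol(V_i(s,ψ*)) = ν_i for every i = 1, …, N, then ψ* is a global maximizer of the Kantorovich functional: for every ψ ∈ ℝ^N one has K(s,ν,ψ) ≤ K(s,ν,ψ*). -/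
open MeasureTheory
open scoped RealInnerProductSpace

noncomputable section

/-!
Write `c_i^ψ(x) = ‖x - s_i‖² - ψ_i`. On `closure D` the function `∑ᵢ 1_{V_i(ψ)} c_i^ψ` is the
lower envelope `min (0, minᵢ c_i^ψ)`, so it lies below `∑ᵢ 1_{V_i(ψ*)} c_i^ψ` wherever the cells
of `ψ*` do not overlap, i.e. almost everywhere (distinct seeds make overlaps lie in hyperplanes).
Integrating gives `K(ψ) - ∑ νᵢ ψᵢ ≤ ∑ᵢ ∫_{V_i(ψ*)} (c_i^{ψ*} + ψ*_i - ψ_i)`, and the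
hypothesis `vol V_i(ψ*) = νᵢ` turns the right-hand side into `K(ψ*) - ∑ νᵢ ψᵢ`.
-/

theorem MeasureTheory.Measure.addHaar_setOf_inner_eq_s1 {E : Type*} [NormedAddCommGroup E]
    [InnerProductSpace ℝ E] [FiniteDimensional ℝ E] [MeasurableSpace E] [BorelSpace E]
    (μ : Measure E) [μ.IsAddHaarMeasure] {v : E} (hv : v ≠ 0) (c : ℝ) :
    μ {x | ⟪v, x⟫ = c} = 0 := by
  let K := LinearMap.ker (innerₛₗ ℝ v)
  have hK : K ≠ ⊤ := fun h ↦ hv <| inner_self_eq_zero.mp <| LinearMap.mem_ker.mp <|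
    h.symm ▸ Submodule.mem_top
  let x₀ : E := (c / ‖v‖ ^ 2) • v
  have hx₀ : ⟪v, x₀⟫ = c := by
    rw [real_inner_smul_right, real_inner_self_eq_norm_sq]
    field_simp [norm_ne_zero_iff.mpr hv]
  have : {x | ⟪v, x⟫ = c} = (· + -x₀) ⁻¹' (K : Set E) := by
    ext x
    simp [K, ← sub_eq_add_neg, inner_sub_right, hx₀, sub_eq_zero]
  rw [this, measure_preimage_add_right]
  exact Measure.addHaar_submodule μ K hK

section LaguerreCells

variable {d N : ℕ} {D : Set (EuclideanSpace ℝ (Fin d))} {s : Fin N → EuclideanSpace ℝ (Fin d)}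

theorem isClosed_Vcell (ψ : Fin N → ℝ) (i : Fin N) : IsClosed (Vcell D s ψ i) := by
  have hLag : Lag D s ψ i = closure D ∩ ⋂ j, ⋂ (_ : j ≠ i),
      {x | ‖x - s i‖ ^ 2 - ψ i ≤ ‖x - s j‖ ^ 2 - ψ j} := by
    ext x; simp [Lag]
  refine IsClosed.inter ?_ (isClosed_le (by fun_prop) (by fun_prop))
  rw [hLag]
  exact isClosed_closure.inter <| isClosed_iInter fun j ↦ isClosed_iInter fun _ ↦
    isClosed_le (by fun_prop) (by fun_prop)

theorem isCompact_Vcell (hD : Bornology.IsBounded D) (ψ : Fin N → ℝ) (i : Fin N) :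
    IsCompact (Vcell D s ψ i) :=
  Metric.isCompact_of_isClosed_isBounded (isClosed_Vcell ψ i)
    (hD.closure.subset fun _ hx ↦ hx.1.1)

theorem integrable_indicator_Vcell (hD : Bornology.IsBounded D) (φ ψ : Fin N → ℝ) (i : Fin N) :
    Integrable ((Vcell D s φ i).indicator fun x ↦ ‖x - s i‖ ^ 2 - ψ i) := by
  refine IntegrableOn.integrable_indicator ?_ (isClosed_Vcell φ i).measurableSet
  exact (by fun_prop : Continuous fun x ↦ ‖x - s i‖ ^ 2 - ψ i).continuousOn.integrableOn_compact
    (isCompact_Vcell hD φ i)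

/-- Two Laguerre cells meet inside the hyperplane `⟪2 (s j - s i), x⟫ = const`. -/
theorem volume_Lag_inter_Lag (hs : Function.Injective s) (ψ : Fin N → ℝ) {i j : Fin N}
    (hij : i ≠ j) : volume (Lag D s ψ i ∩ Lag D s ψ j) = 0 := by
  have hv : (2 : ℝ) • (s j - s i) ≠ 0 :=
    smul_ne_zero two_ne_zero (sub_ne_zero.mpr (hs.ne hij.symm))
  refine measure_mono_null (fun x hx ↦ ?_) (volume.addHaar_setOf_inner_eq_s1 hv
    (‖s j‖ ^ 2 - ‖s i‖ ^ 2 + ψ i - ψ j))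
  have h₁ := hx.1.2 j hij.symm
  have h₂ := hx.2.2 i hij
  rw [norm_sub_sq_real x (s i), norm_sub_sq_real x (s j)] at h₁ h₂
  change ⟪_, x⟫ = _
  rw [real_inner_smul_left, inner_sub_left, real_inner_comm x, real_inner_comm x]
  linarith

theorem ae_eq_of_mem_Vcell_of_mem_Vcell (hs : Function.Injective s) (ψ : Fin N → ℝ) :
    ∀ᵐ x, ∀ i j, x ∈ Vcell D s ψ i → x ∈ Vcell D s ψ j → i = j := by
  simp only [ae_all_iff]
  intro i j
  by_cases hij : i = j
  · exact .of_forall fun _ _ _ ↦ hij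
  · refine measure_mono_null (fun x hx ↦ ?_) (volume_Lag_inter_Lag (D := D) hs ψ hij)
    by_contra hLag
    exact hx fun hi hj ↦ absurd ⟨hi.1, hj.1⟩ hLag

theorem indicator_Vcell_nonpos (ψ : Fin N → ℝ) (i : Fin N) (x : EuclideanSpace ℝ (Fin d)) :
    (Vcell D s ψ i).indicator (fun y ↦ ‖y - s i‖ ^ 2 - ψ i) x ≤ 0 :=
  Set.indicator_apply_nonpos fun hx ↦ sub_nonpos.mpr hx.2

theorem sum_indicator_Vcell_nonpos (ψ : Fin N → ℝ) (x : EuclideanSpace ℝ (Fin d)) :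
    ∑ i, (Vcell D s ψ i).indicator (fun y ↦ ‖y - s i‖ ^ 2 - ψ i) x ≤ 0 :=
  Finset.sum_nonpos fun i _ ↦ indicator_Vcell_nonpos ψ i x

theorem sum_indicator_Vcell_le {x : EuclideanSpace ℝ (Fin d)} (hx : x ∈ closure D)
    (ψ : Fin N → ℝ) (i : Fin N) :
    ∑ j, (Vcell D s ψ j).indicator (fun y ↦ ‖y - s j‖ ^ 2 - ψ j) x ≤ ‖x - s i‖ ^ 2 - ψ i := by
  obtain ⟨k, -, hk⟩ := Finset.exists_min_image Finset.univ
    (fun j ↦ ‖x - s j‖ ^ 2 - ψ j) ⟨i, Finset.mem_univ i⟩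
  have hki := hk i (Finset.mem_univ i)
  by_cases hpos : 0 < ‖x - s k‖ ^ 2 - ψ k
  · linarith [sum_indicator_Vcell_nonpos (D := D) (s := s) ψ x]
  have hxk : x ∈ Vcell D s ψ k := ⟨⟨hx, fun j _ ↦ hk j (Finset.mem_univ j)⟩, by
    show ‖x - s k‖ ^ 2 ≤ ψ k; linarith⟩
  calc ∑ j, (Vcell D s ψ j).indicator (fun y ↦ ‖y - s j‖ ^ 2 - ψ j) x
      = ‖x - s k‖ ^ 2 - ψ k + ∑ j ∈ Finset.univ.erase k,
          (Vcell D s ψ j).indicator (fun y ↦ ‖y - s j‖ ^ 2 - ψ j) x := by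
        rw [← Finset.add_sum_erase _ _ (Finset.mem_univ k), Set.indicator_of_mem hxk]
    _ ≤ ‖x - s k‖ ^ 2 - ψ k := by
        linarith [Finset.sum_nonpos fun j (_ : j ∈ Finset.univ.erase k) ↦
          indicator_Vcell_nonpos (D := D) (s := s) ψ j x]
    _ ≤ ‖x - s i‖ ^ 2 - ψ i := hki

theorem sum_indicator_Vcell_le_sum_indicator_Vcell (ψ φ : Fin N → ℝ)
    {x : EuclideanSpace ℝ (Fin d)} (hx : ∀ i j, x ∈ Vcell D s φ i → x ∈ Vcell D s φ j → i = j) :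
    ∑ i, (Vcell D s ψ i).indicator (fun y ↦ ‖y - s i‖ ^ 2 - ψ i) x ≤
      ∑ i, (Vcell D s φ i).indicator (fun y ↦ ‖y - s i‖ ^ 2 - ψ i) x := by
  by_cases hmem : ∃ i, x ∈ Vcell D s φ i
  · obtain ⟨i, hi⟩ := hmem
    rw [Finset.sum_eq_single_of_mem i (Finset.mem_univ i) fun j _ hji ↦
      Set.indicator_of_notMem (fun hj ↦ hji (hx j i hj hi)) _, Set.indicator_of_mem hi]
    exact sum_indicator_Vcell_le hi.1.1 ψ i
  · push Not at hmem
    simpa [Set.indicator_of_notMem (hmem _)] using sum_indicator_Vcell_nonpos ψ x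

theorem Kfun_eq_integral (hD : Bornology.IsBounded D) (ν ψ : Fin N → ℝ) :
    Kfun D s ν ψ =
      (∫ x, ∑ i, (Vcell D s ψ i).indicator (fun y ↦ ‖y - s i‖ ^ 2 - ψ i) x) + ∑ i, ν i * ψ i := by
  rw [integral_finsetSum _ fun i _ ↦ integrable_indicator_Vcell hD ψ ψ i, Kfun]
  simp_rw [integral_indicator (isClosed_Vcell _ _).measurableSet]

theorem integral_sum_indicator_Vcell_eq (hD : Bornology.IsBounded D) {ν φ : Fin N → ℝ}
    (hν : ∀ i, volume.real (Vcell D s φ i) = ν i) (ψ : Fin N → ℝ) :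
    ∫ x, ∑ i, (Vcell D s φ i).indicator (fun y ↦ ‖y - s i‖ ^ 2 - ψ i) x =
      Kfun D s ν φ - ∑ i, ν i * ψ i := by
  rw [integral_finsetSum _ fun i _ ↦ integrable_indicator_Vcell hD φ ψ i, Kfun,
    add_sub_assoc, ← Finset.sum_sub_distrib, ← Finset.sum_add_distrib]
  refine Finset.sum_congr rfl fun i _ ↦ ?_
  have hcost : ∀ y, ‖y - s i‖ ^ 2 - ψ i = (‖y - s i‖ ^ 2 - φ i) + (φ i - ψ i) := fun _ ↦ by ring
  rw [integral_indicator (isClosed_Vcell _ _).measurableSet, funext hcost,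
    integral_add ?_ ?_, setIntegral_const, smul_eq_mul, hν, mul_sub]
  · exact (integrable_indicator_iff (isClosed_Vcell φ i).measurableSet).mp
      (integrable_indicator_Vcell hD φ φ i)
  · exact integrableOn_const (isCompact_Vcell hD φ i).measure_lt_top.ne

end LaguerreCells

theorem stmt1_general {d N : ℕ}
    (D : Set (EuclideanSpace ℝ (Fin d)))
    (hDb : Bornology.IsBounded D)
    (s : Fin N → EuclideanSpace ℝ (Fin d)) (hs : Function.Injective s)
    (ν : Fin N → ℝ) (ψstar : Fin N → ℝ)
    (hψ : ∀ i, (volume (Vcell D s ψstar i)).toReal = ν i) :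
    ∀ ψ : Fin N → ℝ, Kfun D s ν ψ ≤ Kfun D s ν ψstar := by
  intro ψ
  have key := integral_mono_ae
    (integrable_finsetSum _ fun i _ ↦ integrable_indicator_Vcell hDb ψ ψ i)
    (integrable_finsetSum _ fun i _ ↦ integrable_indicator_Vcell hDb ψstar ψ i)
    ((ae_eq_of_mem_Vcell_of_mem_Vcell hs ψstar).mono fun _ hx ↦
      sum_indicator_Vcell_le_sum_indicator_Vcell ψ ψstar hx)
  rw [integral_sum_indicator_Vcell_eq hDb hψ ψ] at key
  rw [Kfun_eq_integral hDb]
  linarith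

/-- A weight vector realizing the prescribed cell measures is a global maximizer of the
Kantorovich functional. -/
theorem stmt1 {d N : ℕ} (hd : 1 ≤ d)
    (D : Set (EuclideanSpace ℝ (Fin d)))
    (hDo : IsOpen D) (hDb : Bornology.IsBounded D)
    (s : Fin N → EuclideanSpace ℝ (Fin d)) (hs : Function.Injective s)
    (ν : Fin N → ℝ) (ψstar : Fin N → ℝ)
    (hψ : ∀ i, (volume (Vcell D s ψstar i)).toReal = ν i) :
    ∀ ψ : Fin N → ℝ, Kfun D s ν ψ ≤ Kfun D s ν ψstar :=
  stmt1_general D hDb s hs ν ψstar hψ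
end
end

section
/- Let m, n, k ≥ 1 (finite-dimensional Euclidean spaces ℝ^m for seeds, ℝ^n for cell measures and weights, ℝ^k for vertices). Let F : ℝ^m × ℝ^n × ℝ^n → ℝ^n, Q : ℝ^m × ℝ^n → ℝ^k, J : ℝ^k → ℝ and ψ* : ℝ^m × ℝ^n → ℝ^n be maps, fix (s,ν) ∈ ℝ^m × ℝ^n and write ψ₀ := ψ*(s,ν), q := Q(s,ψ₀). Assume: ψ* is (Fréchet) differentiable at (s,ν); Q is differentiable at (s,ψ₀); F is differentiable at (s,ν,ψ₀); J is differentiable at q; and F(s',ν',ψ*(s',ν')) = 0 for all (s',ν') in a neighborhood of (s,ν). Suppose p ∈ ℝ^n solves the adjoint system [∂_ψF(s,ν,ψ₀)]ᵀ p = −[∂_ψQ(s,ψ₀)]ᵀ ∇J(q). Define the composite functional J̃(s',ν') := J(Q(s', ψ*(s',ν'))). Then J̃ is differentiable at (s,ν) with ∇_s J̃(s,ν) = [∂_s Q(s,ψ₀)]ᵀ ∇J(q) + [∂_s F(s,ν,ψ₀)]ᵀ p and ∇_ν J̃(s,ν) = [∂_ν F(s,ν,ψ₀)]ᵀ p. 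-/
/-!
Differentiating the constraint `F(s, ν, ψ*(s, ν)) = 0` gives `∂_{(s,ν)}F + ∂_ψF ∘ Dψ* = 0`.
By the chain rule, `DJ̃ = ⟪∇J, ∂_sQ + ∂_ψQ ∘ Dψ*⟫`, and the adjoint equation turns the term
`⟪∇J, ∂_ψQ ∘ Dψ*⟫` into `-⟪p, ∂_ψF ∘ Dψ*⟫ = ⟪p, ∂_{(s,ν)}F⟫`, so `Dψ*` drops out.
-/

noncomputable section

namespace Stmt14

variable {m n k : ℕ}

local notation "Em" => EuclideanSpace ℝ (Fin m)
local notation "En" => EuclideanSpace ℝ (Fin n)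
local notation "Ek" => EuclideanSpace ℝ (Fin k)

open ContinuousLinearMap Filter Topology InnerProductSpace

section ImplicitConstraint

variable {X Y W R : Type*}
  [NormedAddCommGroup X] [NormedSpace ℝ X] [NormedAddCommGroup Y] [NormedSpace ℝ Y]
  [NormedAddCommGroup W] [NormedSpace ℝ W] [NormedAddCommGroup R] [NormedSpace ℝ R]

theorem implicit_fderiv_apply_eq_zero {F : X × Y × W → R} {ψ : X × Y → W}
    {DF : X × Y × W →L[ℝ] R} {Dψ : X × Y →L[ℝ] W} {x : X × Y}
    (hF : HasFDerivAt F DF (x.1, x.2, ψ x)) (hψ : HasFDerivAt ψ Dψ x)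
    (hzero : ∀ᶠ y in 𝓝 x, F (y.1, y.2, ψ y) = 0) (a : X) (b : Y) :
    DF (a, b, Dψ (a, b)) = 0 := by
  have hgraph : HasFDerivAt (fun y : X × Y => F (y.1, y.2, ψ y))
      (DF.comp ((fst ℝ X Y).prod ((snd ℝ X Y).prod Dψ))) x :=
    hF.comp x (hasFDerivAt_fst.prodMk (hasFDerivAt_snd.prodMk hψ))
  have hconst : HasFDerivAt (fun y : X × Y => F (y.1, y.2, ψ y)) 0 x :=
    (hasFDerivAt_const (𝕜 := ℝ) (0 : R) x).congr_of_eventuallyEq hzero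
  simpa using congr($(hgraph.unique hconst) (a, b))

end ImplicitConstraint

section AdjointState

variable {X Y W R K : Type*}
  [NormedAddCommGroup X] [NormedSpace ℝ X] [NormedAddCommGroup Y] [NormedSpace ℝ Y]
  [NormedAddCommGroup W] [InnerProductSpace ℝ W] [CompleteSpace W]
  [NormedAddCommGroup R] [InnerProductSpace ℝ R] [CompleteSpace R]
  [NormedAddCommGroup K] [InnerProductSpace ℝ K] [CompleteSpace K]

theorem inner_implicit_eq_adjointState {DF : X × Y × W →L[ℝ] R} {DQ : X × W →L[ℝ] K}
    {Dψ : X × Y →L[ℝ] W} {g : K} {p : R}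
    (hlin : ∀ a b, DF (a, b, Dψ (a, b)) = 0)
    (hadj : (DF.comp ((inr ℝ X (Y × W)).comp (inr ℝ Y W))).adjoint p
      = -(DQ.comp (inr ℝ X W)).adjoint g)
    (a : X) (b : Y) :
    ⟪g, DQ (a, Dψ (a, b))⟫_ℝ = ⟪g, DQ (a, 0)⟫_ℝ + ⟪p, DF (a, b, 0)⟫_ℝ := by
  have hQ : DQ (a, Dψ (a, b)) = DQ (a, 0) + DQ (0, Dψ (a, b)) := by
    rw [← map_add, Prod.mk_add_mk, add_zero, zero_add]
  have hFψ : DF (0, 0, Dψ (a, b)) = -DF (a, b, 0) := by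
    rw [eq_neg_iff_add_eq_zero, ← map_add, ← hlin a b]
    simp
  have hpairing : ⟪g, DQ (0, Dψ (a, b))⟫_ℝ = -⟪p, DF (0, 0, Dψ (a, b))⟫_ℝ := by
    refine neg_eq_iff_eq_neg.mp ?_
    simpa [adjoint_inner_left, inner_neg_left] using congr(⟪$hadj, Dψ (a, b)⟫_ℝ).symm
  rw [hQ, inner_add_right, hpairing, hFψ, inner_neg_right, neg_neg]

end AdjointState

theorem HasFDerivAt.hasGradientAt_of_inner {E : Type*} [NormedAddCommGroup E]
    [InnerProductSpace ℝ E] [CompleteSpace E] {f : E → ℝ} {L : E →L[ℝ] ℝ} {x v : E}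
    (hf : HasFDerivAt f L x) (hv : ∀ h, ⟪v, h⟫_ℝ = L h) : HasGradientAt f v x := by
  rwa [hasGradientAt_iff_hasFDerivAt, show toDual ℝ E v = L from
    ext fun h => toDual_apply_apply.trans (hv h)]

theorem stmt14_general
    (F : Em × En × En → En) (Q : Em × En → Ek) (J : Ek → ℝ)
    (ψstar : Em × En → En)
    (s : Em) (ν : En)
    (Dψ : (Em × En) →L[ℝ] En)
    (hψ : HasFDerivAt ψstar Dψ (s, ν))
    (DQ : (Em × En) →L[ℝ] Ek)
    (hQ : HasFDerivAt Q DQ (s, ψstar (s, ν)))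
    (DF : (Em × En × En) →L[ℝ] En)
    (hF : HasFDerivAt F DF (s, ν, ψstar (s, ν)))
    (gJ : Ek)
    (hJ : HasGradientAt J gJ (Q (s, ψstar (s, ν))))
    (hzero : ∀ᶠ p in nhds (s, ν), F (p.1, p.2, ψstar p) = 0)
    (p : En)
    (hadj : (DF.comp ((ContinuousLinearMap.inr ℝ Em (En × En)).comp
        (ContinuousLinearMap.inr ℝ En En))).adjoint p
      = - (DQ.comp (ContinuousLinearMap.inr ℝ Em En)).adjoint gJ) :
    DifferentiableAt ℝ (fun q : Em × En => J (Q (q.1, ψstar q))) (s, ν) ∧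
    HasGradientAt (fun s' : Em => J (Q (s', ψstar (s', ν))))
      ((DQ.comp (ContinuousLinearMap.inl ℝ Em En)).adjoint gJ
        + (DF.comp (ContinuousLinearMap.inl ℝ Em (En × En))).adjoint p) s ∧
    HasGradientAt (fun ν' : En => J (Q (s, ψstar (s, ν'))))
      ((DF.comp ((ContinuousLinearMap.inr ℝ Em (En × En)).comp
          (ContinuousLinearMap.inl ℝ En En))).adjoint p) ν := by
  have hlin := implicit_fderiv_apply_eq_zero hF hψ hzero
  have hfull : HasFDerivAt (fun q : Em × En => J (Q (q.1, ψstar q)))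
      ((toDual ℝ Ek gJ).comp (DQ.comp ((fst ℝ Em En).prod Dψ))) (s, ν) :=
    hJ.hasFDerivAt.comp (s, ν) (hQ.comp (s, ν) (hasFDerivAt_fst.prodMk hψ))
  refine ⟨hfull.differentiableAt, ?_, ?_⟩
  · have hpartial := hfull.comp s (hasFDerivAt_prodMk_left (𝕜 := ℝ) s ν)
    refine HasFDerivAt.hasGradientAt_of_inner hpartial fun a => ?_
    simp [adjoint_inner_left, inner_add_left, inner_implicit_eq_adjointState hlin hadj a 0,
      Prod.mk_zero_zero]
  · have hpartial := hfull.comp ν (hasFDerivAt_prodMk_right (𝕜 := ℝ) s ν)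
    refine HasFDerivAt.hasGradientAt_of_inner hpartial fun b => ?_
    simp [adjoint_inner_left, inner_implicit_eq_adjointState hlin hadj 0 b, Prod.mk_zero_zero]

/-- Adjoint-state computation: derivatives of the composite functional
`J̃(s, ν) = J(Q(s, ψ*(s, ν)))` with respect to the seed points `s` and the cell
measures `ν`, where `ψ*(s, ν)` is implicitly defined by `F(s, ν, ψ*(s, ν)) = 0` and
`p` solves the adjoint system `[∂_ψ F]ᵀ p = -[∂_ψ Q]ᵀ ∇J(q)`. -/
theorem stmt14 (hm : 1 ≤ m) (hn : 1 ≤ n) (hk : 1 ≤ k)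
    (F : Em × En × En → En) (Q : Em × En → Ek) (J : Ek → ℝ)
    (ψstar : Em × En → En)
    (s : Em) (ν : En)
    (Dψ : (Em × En) →L[ℝ] En)
    (hψ : HasFDerivAt ψstar Dψ (s, ν))
    (DQ : (Em × En) →L[ℝ] Ek)
    (hQ : HasFDerivAt Q DQ (s, ψstar (s, ν)))
    (DF : (Em × En × En) →L[ℝ] En)
    (hF : HasFDerivAt F DF (s, ν, ψstar (s, ν)))
    (gJ : Ek)
    (hJ : HasGradientAt J gJ (Q (s, ψstar (s, ν))))
    (hzero : ∀ᶠ p in nhds (s, ν), F (p.1, p.2, ψstar p) = 0)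
    (p : En)
    (hadj : (DF.comp ((ContinuousLinearMap.inr ℝ Em (En × En)).comp
        (ContinuousLinearMap.inr ℝ En En))).adjoint p
      = - (DQ.comp (ContinuousLinearMap.inr ℝ Em En)).adjoint gJ) :
    DifferentiableAt ℝ (fun q : Em × En => J (Q (q.1, ψstar q))) (s, ν) ∧
    HasGradientAt (fun s' : Em => J (Q (s', ψstar (s', ν))))
      ((DQ.comp (ContinuousLinearMap.inl ℝ Em En)).adjoint gJ
        + (DF.comp (ContinuousLinearMap.inl ℝ Em (En × En))).adjoint p) s ∧
    HasGradientAt (fun ν' : En => J (Q (s, ψstar (s, ν'))))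
      ((DF.comp ((ContinuousLinearMap.inr ℝ Em (En × En)).comp
          (ContinuousLinearMap.inl ℝ En En))).adjoint p) ν :=
  stmt14_general F Q J ψstar s ν Dψ hψ DQ hQ DF hF gJ hJ hzero p hadj

end Stmt14
end
end

section
/- Let E ⊆ ℝ² be a bounded open set with 0 < vol(E) < ∞, let λ, μ > 0 be Lamé coefficients, let q_1, …, q_n ∈ ℝ² (n ≥ 1) and q̄ := (1/n) Σ_{i=1}^n q_i. Let u, v : ℝ² → ℝ² be continuously differentiable on a neighborhood of closure(E). With the projections π_R u(x) := ū + ⟨ω(u)⟩ (−(x₂ − q̄₂), x₁ − q̄₁), π_C u(x) := ⟨e(u)⟩ (x − q̄), and π_P u := π_R u + π_C u, the local elastic energy bilinear form decomposes as a^E(u,v) = a^E(π_C u, π_C v) + a^E(u − π_P u, v − π_P v). -/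
open MeasureTheory

noncomputable section

/-- The Jacobian matrix `(∂_j u_i)_{ij}` of a planar vector field. -/
def gradMat (u : EuclideanSpace ℝ (Fin 2) → EuclideanSpace ℝ (Fin 2))
    (x : EuclideanSpace ℝ (Fin 2)) : Matrix (Fin 2) (Fin 2) ℝ :=
  Matrix.of fun i j => fderiv ℝ u x (EuclideanSpace.single j 1) i

/-- The linearized strain `e(u) = ½ (Du + Duᵀ)`. -/
def strain (u : EuclideanSpace ℝ (Fin 2) → EuclideanSpace ℝ (Fin 2))
    (x : EuclideanSpace ℝ (Fin 2)) : Matrix (Fin 2) (Fin 2) ℝ :=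
  Matrix.of fun i j => (gradMat u x i j + gradMat u x j i) / 2

/-- Half the scalar curl `ω(u) = ½ (∂₁u₂ - ∂₂u₁)`. -/
def curlHalf (u : EuclideanSpace ℝ (Fin 2) → EuclideanSpace ℝ (Fin 2))
    (x : EuclideanSpace ℝ (Fin 2)) : ℝ :=
  (gradMat u x 1 0 - gradMat u x 0 1) / 2

/-- The Hooke tensor `Aξ = 2μ ξ + λ tr(ξ) I`. -/
def hooke (lam mu : ℝ) (ξ : Matrix (Fin 2) (Fin 2) ℝ) : Matrix (Fin 2) (Fin 2) ℝ :=
  (2 * mu) • ξ + (lam * ξ.trace) • (1 : Matrix (Fin 2) (Fin 2) ℝ)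

/-- The local elastic energy bilinear form `a^E(u,v) = ∫_E Ae(u) : e(v) dx`. -/
def aEelas (E : Set (EuclideanSpace ℝ (Fin 2))) (lam mu : ℝ)
    (u v : EuclideanSpace ℝ (Fin 2) → EuclideanSpace ℝ (Fin 2)) : ℝ :=
  ∫ x in E, ∑ i, ∑ j, hooke lam mu (strain u x) i j * strain v x i j

/-- The mean strain `⟨e(u)⟩ = (1/vol E) ∫_E e(u) dx` (computed entrywise). -/
def meanStrain (E : Set (EuclideanSpace ℝ (Fin 2)))
    (u : EuclideanSpace ℝ (Fin 2) → EuclideanSpace ℝ (Fin 2)) :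
    Matrix (Fin 2) (Fin 2) ℝ :=
  Matrix.of fun i j => (volume E).toReal⁻¹ * ∫ x in E, strain u x i j

/-- The mean rotation `⟨ω(u)⟩ = (1/vol E) ∫_E ω(u) dx`. -/
def meanRot (E : Set (EuclideanSpace ℝ (Fin 2)))
    (u : EuclideanSpace ℝ (Fin 2) → EuclideanSpace ℝ (Fin 2)) : ℝ :=
  (volume E).toReal⁻¹ * ∫ x in E, curlHalf u x

/-- The vertex average `ū = (1/n) ∑ u(q_i)`. -/
def vavg (n : ℕ) (q : Fin n → EuclideanSpace ℝ (Fin 2))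
    (u : EuclideanSpace ℝ (Fin 2) → EuclideanSpace ℝ (Fin 2)) :
    EuclideanSpace ℝ (Fin 2) :=
  (n : ℝ)⁻¹ • ∑ i, u (q i)

/-- Matrix-vector multiplication landing in `EuclideanSpace ℝ (Fin 2)`. -/
def matVec (M : Matrix (Fin 2) (Fin 2) ℝ) (v : EuclideanSpace ℝ (Fin 2)) :
    EuclideanSpace ℝ (Fin 2) :=
  ∑ i, EuclideanSpace.single i (∑ j, M i j * v j)

/-- The 90° rotation `v ↦ (-v₂, v₁)`. -/
def rot90 (v : EuclideanSpace ℝ (Fin 2)) : EuclideanSpace ℝ (Fin 2) :=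
  EuclideanSpace.single 0 (-(v 1)) + EuclideanSpace.single 1 (v 0)

/-- The projection `π_R u (x) = ū + ⟨ω(u)⟩ (-(x₂ - q̄₂), x₁ - q̄₁)` onto rigid-body
motions, with base point the vertex average `q̄`. -/
def piRelas (E : Set (EuclideanSpace ℝ (Fin 2))) (n : ℕ)
    (q : Fin n → EuclideanSpace ℝ (Fin 2))
    (u : EuclideanSpace ℝ (Fin 2) → EuclideanSpace ℝ (Fin 2)) :
    EuclideanSpace ℝ (Fin 2) → EuclideanSpace ℝ (Fin 2) :=
  fun x => vavg n q u + meanRot E u • rot90 (x - (n : ℝ)⁻¹ • ∑ i, q i)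

/-- The projection `π_C u (x) = ⟨e(u)⟩ (x - q̄)` onto constant-strain fields. -/
def piCelas (E : Set (EuclideanSpace ℝ (Fin 2)))
    (qbar : EuclideanSpace ℝ (Fin 2))
    (u : EuclideanSpace ℝ (Fin 2) → EuclideanSpace ℝ (Fin 2)) :
    EuclideanSpace ℝ (Fin 2) → EuclideanSpace ℝ (Fin 2) :=
  fun x => matVec (meanStrain E u) (x - qbar)

/-- The projection `π_P u = π_R u + π_C u` onto affine displacement fields. -/
def piPelas (E : Set (EuclideanSpace ℝ (Fin 2))) (n : ℕ)
    (q : Fin n → EuclideanSpace ℝ (Fin 2))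
    (u : EuclideanSpace ℝ (Fin 2) → EuclideanSpace ℝ (Fin 2)) :
    EuclideanSpace ℝ (Fin 2) → EuclideanSpace ℝ (Fin 2) :=
  fun x => piRelas E n q u x + piCelas E ((n : ℝ)⁻¹ • ∑ i, q i) u x

/-! On `E`, the strain of `π_C u` is the constant `⟨e(u)⟩`, and the strain of `u - π_P u` is
`e(u) - ⟨e(u)⟩`, because the rotation part of `π_P u` is an infinitesimal rigid motion. Writing
`B(S, T) = AS : T`, the claim is therefore the bias–variance identity
`∫_E B(f - ⟨f⟩, g - ⟨g⟩) = ∫_E B(f, g) - |E| B(⟨f⟩, ⟨g⟩)` for `f = e(u)`, `g = e(v)`,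
which holds for every continuous bilinear form `B` since `∫_E f = |E| ⟨f⟩`. -/

local notation "ℝ²" => EuclideanSpace ℝ (Fin 2)

open Matrix

theorem setIntegral_bilin_sub_setAverage {X F : Type*} [MeasurableSpace X] {μ : Measure X}
    {s : Set X} [NormedAddCommGroup F] [NormedSpace ℝ F] [CompleteSpace F]
    (B : F →L[ℝ] F →L[ℝ] ℝ) {f g : X → F} (hs : μ s ≠ ⊤)
    (hf : IntegrableOn f s μ) (hg : IntegrableOn g s μ)
    (hfg : IntegrableOn (fun x => B (f x) (g x)) s μ) :
    ∫ x in s, B (f x - ⨍ y in s, f y ∂μ) (g x - ⨍ y in s, g y ∂μ) ∂μ =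
      ∫ x in s, B (f x) (g x) ∂μ - μ.real s * B (⨍ y in s, f y ∂μ) (⨍ y in s, g y ∂μ) := by
  set a := ⨍ y in s, f y ∂μ
  set b := ⨍ y in s, g y ∂μ
  have hfb : IntegrableOn (fun x => B (f x) b) s μ := (B.flip b).integrable_comp hf
  have hag : IntegrableOn (fun x => B a (g x)) s μ := (B a).integrable_comp hg
  have hab : IntegrableOn (fun _ => B a b) s μ := integrableOn_const hs
  have hfb_int : ∫ x in s, B (f x) b ∂μ = μ.real s * B a b := by
    have := (B.flip b).integral_comp_comm hf
    rw [ContinuousLinearMap.flip_apply, ← measure_smul_setAverage f hs] at this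
    simpa using this
  have hag_int : ∫ x in s, B a (g x) ∂μ = μ.real s * B a b := by
    rw [(B a).integral_comp_comm hg, ← measure_smul_setAverage g hs, map_smul, smul_eq_mul]
  have hfg_fb : IntegrableOn (fun x => B (f x) (g x) - B (f x) b) s μ := hfg.sub hfb
  have hag_ab : IntegrableOn (fun x => B a (g x) - B a b) s μ := hag.sub hab
  calc ∫ x in s, B (f x - a) (g x - b) ∂μ
      = ∫ x in s, (B (f x) (g x) - B (f x) b) - (B a (g x) - B a b) ∂μ := by
        simp only [map_sub, FunLike.coe_sub, Pi.sub_apply, sub_sub_sub_comm]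
    _ = ∫ x in s, B (f x) (g x) ∂μ - μ.real s * B a b := by
        rw [integral_sub hfg_fb hag_ab, integral_sub hfg hfb, integral_sub hag hab,
          hfb_int, hag_int, setIntegral_const, smul_eq_mul]
        ring

theorem Bornology.IsBounded.integrableOn_of_continuousOn_closure {X G : Type*} [MetricSpace X]
    [ProperSpace X] [MeasurableSpace X] [OpensMeasurableSpace X] {μ : Measure X}
    [IsFiniteMeasureOnCompacts μ] [NormedAddCommGroup G] {s : Set X} {f : X → G}
    (hs : Bornology.IsBounded s) (hf : ContinuousOn f (closure s)) : IntegrableOn f s μ :=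
  (hf.integrableOn_compact hs.isCompact_closure).mono_set subset_closure

theorem hasFDerivAt_const_add_apply_sub {E F : Type*} [NormedAddCommGroup E] [NormedSpace ℝ E]
    [NormedAddCommGroup F] [NormedSpace ℝ F] (a : F) (c : E) (L : E →L[ℝ] F) (x : E) :
    HasFDerivAt (fun y => a + L (y - c)) L x := by
  simpa using ((L.hasFDerivAt (x := x)).sub_const (L c)).const_add a

theorem inv_two_smul_add_transpose {n : Type*} {M : Matrix n n ℝ} (hM : M.IsSymm) :
    (2 : ℝ)⁻¹ • (M + Mᵀ) = M := by
  rw [hM.eq, ← two_smul ℝ M, smul_smul, inv_mul_cancel₀ two_ne_zero, one_smul]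

theorem inv_two_smul_add_transpose_of_add_skew {n : Type*} {K M : Matrix n n ℝ} (hK : Kᵀ = -K)
    (hM : M.IsSymm) : (2 : ℝ)⁻¹ • (K + M + (K + M)ᵀ) = M := by
  rw [transpose_add, hK, add_add_add_comm, add_neg_cancel, zero_add, inv_two_smul_add_transpose hM]

section Strain

variable {u w : ℝ² → ℝ²} {x : ℝ²}

theorem gradMat_of_hasFDerivAt {M : Matrix (Fin 2) (Fin 2) ℝ}
    (h : HasFDerivAt u (toEuclideanCLM (𝕜 := ℝ) M) x) : gradMat u x = M := by
  ext i j
  simp [gradMat, h.fderiv]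

theorem gradMat_sub (hu : DifferentiableAt ℝ u x) (hw : DifferentiableAt ℝ w x) :
    gradMat (fun y => u y - w y) x = gradMat u x - gradMat w x := by
  ext i j
  simp [gradMat, fderiv_fun_sub hu hw]

theorem continuousOn_gradMat_apply {U : Set ℝ²} (hU : IsOpen U) (hu : ContDiffOn ℝ 1 u U)
    (i j : Fin 2) : ContinuousOn (fun x => gradMat u x i j) U :=
  ((PiLp.continuous_apply 2 _ i).comp
    (ContinuousLinearMap.apply ℝ ℝ² (EuclideanSpace.single j 1)).continuous).comp_continuousOn
    (hu.continuousOn_fderiv_of_isOpen hU le_rfl)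

theorem strain_eq_inv_two_smul : strain u x = (2 : ℝ)⁻¹ • (gradMat u x + (gradMat u x)ᵀ) := by
  ext i j
  simp only [strain, of_apply, Matrix.smul_apply, Matrix.add_apply, transpose_apply, smul_eq_mul]
  ring

theorem strain_sub (hu : DifferentiableAt ℝ u x) (hw : DifferentiableAt ℝ w x) :
    strain (fun y => u y - w y) x = strain u x - strain w x := by
  simp only [strain_eq_inv_two_smul, gradMat_sub hu hw, transpose_sub, sub_add_sub_comm, smul_sub]

theorem strain_of_hasFDerivAt {M : Matrix (Fin 2) (Fin 2) ℝ}
    (h : HasFDerivAt u (toEuclideanCLM (𝕜 := ℝ) M) x) :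
    strain u x = (2 : ℝ)⁻¹ • (M + Mᵀ) := by
  rw [strain_eq_inv_two_smul, gradMat_of_hasFDerivAt h]

theorem strain_const_add_toEuclideanCLM (a c : ℝ²) (M : Matrix (Fin 2) (Fin 2) ℝ) :
    strain (fun y => a + toEuclideanCLM (𝕜 := ℝ) M (y - c)) x = (2 : ℝ)⁻¹ • (M + Mᵀ) :=
  strain_of_hasFDerivAt (hasFDerivAt_const_add_apply_sub a c _ x)

theorem continuousOn_strain {U : Set ℝ²} (hU : IsOpen U) (hu : ContDiffOn ℝ 1 u U) :
    ContinuousOn (fun x i j => strain u x i j) U :=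
  continuousOn_pi.2 fun i => continuousOn_pi.2 fun j =>
    ((continuousOn_gradMat_apply hU hu i j).add (continuousOn_gradMat_apply hU hu j i)).div_const 2

end Strain

theorem matVec_eq_toEuclideanCLM (M : Matrix (Fin 2) (Fin 2) ℝ) (v : ℝ²) :
    matVec M v = toEuclideanCLM (𝕜 := ℝ) M v := by
  ext i
  fin_cases i <;> simp [matVec, mulVec, dotProduct]

def rot90Mat : Matrix (Fin 2) (Fin 2) ℝ := !![0, -1; 1, 0]

theorem transpose_rot90Mat : rot90Matᵀ = -rot90Mat := by
  ext i j
  fin_cases i <;> fin_cases j <;> simp [rot90Mat]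

theorem rot90_eq_toEuclideanCLM (v : ℝ²) : rot90 v = toEuclideanCLM (𝕜 := ℝ) rot90Mat v := by
  ext i
  fin_cases i <;> simp [rot90, rot90Mat, mulVec, dotProduct]

section Projections

variable (E : Set ℝ²) (n : ℕ) (q : Fin n → ℝ²)

theorem isSymm_meanStrain (u : ℝ² → ℝ²) : (meanStrain E u).IsSymm := by
  ext i j
  simp [meanStrain, strain, add_comm]

theorem strain_piCelas (c : ℝ²) (u : ℝ² → ℝ²) (x : ℝ²) :
    strain (piCelas E c u) x = meanStrain E u := by
  have h : piCelas E c u = fun y => 0 + toEuclideanCLM (𝕜 := ℝ) (meanStrain E u) (y - c) := by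
    ext y : 1
    simp [piCelas, matVec_eq_toEuclideanCLM]
  rw [h, strain_const_add_toEuclideanCLM, inv_two_smul_add_transpose (isSymm_meanStrain E u)]

theorem piPelas_eq (u : ℝ² → ℝ²) :
    piPelas E n q u = fun y => vavg n q u +
      toEuclideanCLM (𝕜 := ℝ) (meanRot E u • rot90Mat + meanStrain E u)
        (y - (n : ℝ)⁻¹ • ∑ i, q i) := by
  ext y : 1
  simp only [piPelas, piRelas, piCelas, rot90_eq_toEuclideanCLM, matVec_eq_toEuclideanCLM,
    map_add, map_smul, _root_.add_apply, _root_.smul_apply, add_assoc]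

theorem strain_sub_piPelas {u : ℝ² → ℝ²} {x : ℝ²} (hu : DifferentiableAt ℝ u x) :
    strain (fun y => u y - piPelas E n q u y) x = strain u x - meanStrain E u := by
  rw [piPelas_eq, strain_sub hu (hasFDerivAt_const_add_apply_sub _ _ _ x).differentiableAt,
    strain_const_add_toEuclideanCLM,
    inv_two_smul_add_transpose_of_add_skew _ (isSymm_meanStrain E u)]
  rw [transpose_smul, transpose_rot90Mat, smul_neg]

end Projections

/- `Integrable` finds no `ContinuousENorm` on `Matrix` under any of its scoped norms, so strains enter
the energy as `Fin 2 → Fin 2 → ℝ` and mean strains become averages of this Pi-valued function. -/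
def hookeForm (lam mu : ℝ) : (Fin 2 → Fin 2 → ℝ) →L[ℝ] (Fin 2 → Fin 2 → ℝ) →L[ℝ] ℝ :=
  LinearMap.toContinuousLinearMap <| LinearMap.toContinuousLinearMap.toLinearMap ∘ₗ
    LinearMap.mk₂ ℝ (fun S T => ∑ i, ∑ j, hooke lam mu (of S) i j * T i j)
      (fun S S' T => by simp [hooke, Fin.sum_univ_two, trace_fin_two]; ring)
      (fun c S T => by simp [hooke, Fin.sum_univ_two, trace_fin_two]; ring)
      (fun S T T' => by simp [hooke, Fin.sum_univ_two]; ring)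
      (fun c S T => by simp [hooke, Fin.sum_univ_two]; ring)

section Energy

variable (E : Set ℝ²) (lam mu : ℝ)

theorem aEelas_eq_integral_hookeForm (u v : ℝ² → ℝ²) :
    aEelas E lam mu u v =
      ∫ x in E, hookeForm lam mu (fun i j => strain u x i j) (fun i j => strain v x i j) := rfl

theorem meanStrain_eq_setAverage {u : ℝ² → ℝ²}
    (hu : IntegrableOn (fun x i j => strain u x i j) E) :
    (fun i j => meanStrain E u i j) = ⨍ x in E, fun i j => strain u x i j := by
  ext i j
  have hrow (i : Fin 2) : IntegrableOn (fun x j => strain u x i j) E := hu.eval i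
  rw [setAverage_eq, Pi.smul_apply, Pi.smul_apply, eval_integral hu.eval,
    eval_integral (hrow i).eval]
  rfl

theorem aEelas_piCelas (c : ℝ²) (u v : ℝ² → ℝ²) :
    aEelas E lam mu (piCelas E c u) (piCelas E c v) =
      volume.real E * hookeForm lam mu (fun i j => meanStrain E u i j)
        (fun i j => meanStrain E v i j) := by
  simp only [aEelas_eq_integral_hookeForm, strain_piCelas, setIntegral_const, smul_eq_mul]

theorem aEelas_sub_piPelas (n : ℕ) (q : Fin n → ℝ²) {U : Set ℝ²} (hU : IsOpen U) (hEU : E ⊆ U)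
    {u v : ℝ² → ℝ²} (hu : DifferentiableOn ℝ u U) (hv : DifferentiableOn ℝ v U) :
    aEelas E lam mu (fun x => u x - piPelas E n q u x) (fun x => v x - piPelas E n q v x) =
      ∫ x in E, hookeForm lam mu
        ((fun i j => strain u x i j) - fun i j => meanStrain E u i j)
        ((fun i j => strain v x i j) - fun i j => meanStrain E v i j) := by
  rw [aEelas_eq_integral_hookeForm]
  refine integral_congr_ae (ae_restrict_of_ae_restrict_of_subset hEU
    ((ae_restrict_mem hU.measurableSet).mono fun x hx => ?_))
  simp only [strain_sub_piPelas E n q (hu.differentiableAt (hU.mem_nhds hx)),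
    strain_sub_piPelas E n q (hv.differentiableAt (hU.mem_nhds hx))]
  rfl

end Energy

theorem stmt17_general
    (E : Set (EuclideanSpace ℝ (Fin 2)))
    (hEb : Bornology.IsBounded E)
    (lam mu : ℝ)
    (n : ℕ) (q : Fin n → EuclideanSpace ℝ (Fin 2))
    (u v : EuclideanSpace ℝ (Fin 2) → EuclideanSpace ℝ (Fin 2))
    (U : Set (EuclideanSpace ℝ (Fin 2))) (hU : IsOpen U) (hEU : closure E ⊆ U)
    (hu : ContDiffOn ℝ 1 u U) (hv : ContDiffOn ℝ 1 v U) :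
    aEelas E lam mu u v =
      aEelas E lam mu (piCelas E ((n : ℝ)⁻¹ • ∑ i, q i) u)
        (piCelas E ((n : ℝ)⁻¹ • ∑ i, q i) v)
      + aEelas E lam mu (fun x => u x - piPelas E n q u x)
          (fun x => v x - piPelas E n q v x) := by
  have hIu : IntegrableOn (fun x i j => strain u x i j) E :=
    hEb.integrableOn_of_continuousOn_closure ((continuousOn_strain hU hu).mono hEU)
  have hIv : IntegrableOn (fun x i j => strain v x i j) E :=
    hEb.integrableOn_of_continuousOn_closure ((continuousOn_strain hU hv).mono hEU)
  have hIuv : IntegrableOn (fun x => hookeForm lam mu (fun i j => strain u x i j)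
      (fun i j => strain v x i j)) E :=
    hEb.integrableOn_of_continuousOn_closure <|
      (((hookeForm lam mu).continuous.comp_continuousOn (continuousOn_strain hU hu)).clm_apply
        (continuousOn_strain hU hv)).mono hEU
  rw [aEelas_piCelas, aEelas_sub_piPelas E lam mu n q hU (subset_closure.trans hEU)
      (hu.differentiableOn one_ne_zero) (hv.differentiableOn one_ne_zero),
    meanStrain_eq_setAverage E hIu, meanStrain_eq_setAverage E hIv,
    setIntegral_bilin_sub_setAverage _ hEb.measure_lt_top.ne hIu hIv hIuv,
    aEelas_eq_integral_hookeForm]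
  ring

/-- Energy decomposition for the Virtual Element Method in linear elasticity:
`a^E(u,v) = a^E(π_C u, π_C v) + a^E(u - π_P u, v - π_P v)`. -/
theorem stmt17
    (E : Set (EuclideanSpace ℝ (Fin 2))) (hEo : IsOpen E)
    (hEb : Bornology.IsBounded E) (hEpos : 0 < volume E)
    (lam mu : ℝ) (hlam : 0 < lam) (hmu : 0 < mu)
    (n : ℕ) (hn : 1 ≤ n) (q : Fin n → EuclideanSpace ℝ (Fin 2))
    (u v : EuclideanSpace ℝ (Fin 2) → EuclideanSpace ℝ (Fin 2))
    (U : Set (EuclideanSpace ℝ (Fin 2))) (hU : IsOpen U) (hEU : closure E ⊆ U)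
    (hu : ContDiffOn ℝ 1 u U) (hv : ContDiffOn ℝ 1 v U) :
    aEelas E lam mu u v =
      aEelas E lam mu (piCelas E ((n : ℝ)⁻¹ • ∑ i, q i) u)
        (piCelas E ((n : ℝ)⁻¹ • ∑ i, q i) v)
      + aEelas E lam mu (fun x => u x - piPelas E n q u x)
          (fun x => v x - piPelas E n q v x) :=
  stmt17_general E hEb lam mu n q u v U hU hEU hu hv
end
end
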